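/- arXiv:2012.04819 — 7 statements merged into one kernel-verified Lean document; each statement's English description precedes it below -/
import Mathlib

section
/- Let 0 < α < 1, t₀ < t, let S : [t₀,t] → (0,∞) be continuously differentiable, and let g : (0,∞) → (0,∞) be continuous and monotone increasing. Define w(y) = S(y) − S(t) − ∫_{S(t)}^{S(y)} g(S(t))/g(X) dX and Ψ(t) = (1/Γ(1−α)) ∫_{t₀}^{t} S′(y)(t−y)^{−α} (1 − g(S(t))/g(S(y))) dy. Then Ψ(t) = −((t−t₀)^{−α}/Γ(1−α)) w(t₀) − ∫_{t₀}^{t} (α (t−y)^{−(α+1)}/Γ(1−α)) w(y) dy. -/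
/-!
Writing `w y = S y - S t - ∫_{S t}^{S y} g (S t) / g`, the integrand of `Ψ` is `w' y (t - y)^(-α)`,
so `Ψ` is integrated by parts against the singular weight `(t - y)^(-α)`. The boundary term at `t`
vanishes and both integrals converge because `w` is Lipschitz with `w t = 0`, so that
`|w y| ≤ C (t - y)` and `w y (t - y)^(-α) = O((t - y)^(1 - α))`; in particular the boundary
function extends continuously to `[t₀, t]` and the ordinary fundamental theorem of calculus applies.
-/

open Set MeasureTheory Filter Topology intervalIntegral

theorem intervalIntegrable_sub_rpow {r : ℝ} (hr : -1 < r) (a b c : ℝ) :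
    IntervalIntegrable (fun y => (c - y) ^ r) volume a b := by
  simpa only [sub_sub_cancel] using
    (intervalIntegrable_rpow' (a := c - a) (b := c - b) hr).comp_sub_left c

theorem IntervalIntegrable.of_abs_le_mul_sub_rpow {a b D r : ℝ} {f : ℝ → ℝ} (hab : a ≤ b)
    (hr : -1 < r) (hf : ContinuousOn f (Ioo a b))
    (hbound : ∀ y ∈ Ioo a b, |f y| ≤ D * (b - y) ^ r) :
    IntervalIntegrable f volume a b := by
  have hdom := (intervalIntegrable_sub_rpow hr a b b).const_mul D
  rw [intervalIntegrable_iff_integrableOn_Ioo_of_le hab] at hdom ⊢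
  refine hdom.mono' (hf.aestronglyMeasurable measurableSet_Ioo) ?_
  filter_upwards [ae_restrict_mem measurableSet_Ioo] with y hy
  exact hbound y hy

theorem abs_le_mul_sub_of_hasDerivWithinAt {a b C y : ℝ} {w w' : ℝ → ℝ} (hab : a ≤ b)
    (hw : ∀ y ∈ Icc a b, HasDerivWithinAt w (w' y) (Icc a b) y)
    (hC : ∀ y ∈ Icc a b, ‖w' y‖ ≤ C) (hwb : w b = 0) (hy : y ∈ Icc a b) :
    |w y| ≤ C * (b - y) := by
  have := (convex_Icc a b).norm_image_sub_le_of_norm_hasDerivWithin_le hw hC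
    (right_mem_Icc.2 hab) hy
  rwa [hwb, sub_zero, Real.norm_eq_abs, Real.norm_eq_abs,
    abs_of_nonpos (show y - b ≤ 0 by linarith [hy.2]), neg_sub] at this

theorem abs_mul_sub_rpow_le {b C α y : ℝ} {w : ℝ → ℝ} (hα : α < 1) (hy : y ≤ b)
    (hwy : |w y| ≤ C * (b - y)) :
    |w y * (b - y) ^ (-α)| ≤ C * (b - y) ^ (1 - α) := by
  have hby : 0 ≤ b - y := sub_nonneg.2 hy
  calc |w y * (b - y) ^ (-α)| = |w y| * (b - y) ^ (-α) := by
        rw [abs_mul, abs_of_nonneg (Real.rpow_nonneg hby _)]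
    _ ≤ C * (b - y) * (b - y) ^ (-α) := by gcongr
    _ = C * (b - y) ^ (1 - α) := by
        rw [show 1 - α = 1 + -α by ring, Real.rpow_add' hby (by linarith), Real.rpow_one,
          mul_assoc]

theorem continuousOn_mul_sub_rpow {a b C α : ℝ} {w : ℝ → ℝ} (hα : α < 1)
    (hw : ContinuousOn w (Icc a b)) (hbound : ∀ y ∈ Icc a b, |w y| ≤ C * (b - y)) :
    ContinuousOn (fun y => w y * (b - y) ^ (-α)) (Icc a b) := by
  intro y hy
  rcases hy.2.lt_or_eq with hyb | rfl
  · exact (hw y hy).mul ((continuousAt_const.sub continuousAt_id).rpow_const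
      (Or.inl (sub_pos.2 hyb).ne')).continuousWithinAt
  · have hwb : w y = 0 := by simpa using hbound y hy
    have hlim : Tendsto (fun z => C * (y - z) ^ (1 - α)) (𝓝[Icc a y] y) (𝓝 0) := by
      have hcont : Continuous fun z : ℝ => C * (y - z) ^ (1 - α) :=
        ((continuous_const.sub continuous_id).rpow_const fun _ => Or.inr (by linarith)).const_mul C
      have := hcont.tendsto y
      simpa [Real.zero_rpow (by linarith : (1 : ℝ) - α ≠ 0)] using this.mono_left nhdsWithin_le_nhds
    simp only [ContinuousWithinAt, hwb, zero_mul]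
    refine squeeze_zero_norm' ?_ hlim
    filter_upwards [self_mem_nhdsWithin] with z hz
    exact abs_mul_sub_rpow_le hα hz.2 (hbound z hz)

theorem integral_mul_sub_rpow_eq_of_hasDerivWithinAt {a b α : ℝ} {w w' : ℝ → ℝ} (hab : a < b)
    (hα : α < 1) (hw : ∀ y ∈ Icc a b, HasDerivWithinAt w (w' y) (Icc a b) y)
    (hw' : ContinuousOn w' (Icc a b)) (hwb : w b = 0) :
    ∫ y in a..b, w' y * (b - y) ^ (-α)
      = -(w a * (b - a) ^ (-α)) - ∫ y in a..b, α * (b - y) ^ (-(α + 1)) * w y := by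
  obtain ⟨C, hC⟩ := isCompact_Icc.exists_bound_of_continuousOn hw'
  have hwc : ContinuousOn w (Icc a b) := fun y hy => (hw y hy).continuousWithinAt
  have hbound (y : ℝ) (hy : y ∈ Icc a b) : |w y| ≤ C * (b - y) :=
    abs_le_mul_sub_of_hasDerivWithinAt hab.le hw hC hwb hy
  have hweight (r : ℝ) : ContinuousOn (fun y => (b - y) ^ r) (Ioo a b) := fun y hy =>
    ((continuousAt_const.sub continuousAt_id).rpow_const
      (Or.inl (sub_pos.2 hy.2).ne')).continuousWithinAt
  have hint₁ : IntervalIntegrable (fun y => w' y * (b - y) ^ (-α)) volume a b := by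
    refine .of_abs_le_mul_sub_rpow (D := C) (r := -α) hab.le (by linarith)
      ((hw'.mono Ioo_subset_Icc_self).mul (hweight _)) fun y hy => ?_
    rw [abs_mul, abs_of_nonneg (Real.rpow_nonneg (sub_pos.2 hy.2).le _)]
    exact mul_le_mul_of_nonneg_right (hC y (Ioo_subset_Icc_self hy))
      (Real.rpow_nonneg (sub_pos.2 hy.2).le _)
  have hint₂ : IntervalIntegrable (fun y => α * (b - y) ^ (-(α + 1)) * w y) volume a b := by
    refine .of_abs_le_mul_sub_rpow (D := |α| * C) (r := -α) hab.le (by linarith)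
      ((continuousOn_const.mul (hweight _)).mul (hwc.mono Ioo_subset_Icc_self)) fun y hy => ?_
    have hby : 0 < b - y := sub_pos.2 hy.2
    calc |α * (b - y) ^ (-(α + 1)) * w y| = |α| * (b - y) ^ (-(α + 1)) * |w y| := by
          rw [abs_mul, abs_mul, abs_of_nonneg (Real.rpow_nonneg hby.le _)]
      _ ≤ |α| * (b - y) ^ (-(α + 1)) * (C * (b - y)) := by
          gcongr; exact hbound y (Ioo_subset_Icc_self hy)
      _ = |α| * C * (b - y) ^ (-α) := by
          rw [show -α = -(α + 1) + 1 by ring, Real.rpow_add hby, Real.rpow_one]; ring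
  have hderiv : ∀ y ∈ Ioo a b, HasDerivAt (fun y => w y * (b - y) ^ (-α))
      (w' y * (b - y) ^ (-α) + α * (b - y) ^ (-(α + 1)) * w y) y := by
    intro y hy
    have hweight' := ((hasDerivAt_id' y).const_sub b).rpow_const (p := -α)
      (Or.inl (sub_pos.2 hy.2).ne')
    refine (((hw y (Ioo_subset_Icc_self hy)).hasDerivAt (Icc_mem_nhds hy.1 hy.2)).mul
      hweight').congr_deriv ?_
    rw [show -(α + 1) = -α - 1 by ring]; ring
  have hftc := integral_eq_sub_of_hasDerivAt_of_le hab.le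
    (continuousOn_mul_sub_rpow hα hwc hbound) hderiv (hint₁.add hint₂)
  rw [integral_add hint₁ hint₂, hwb, zero_mul, zero_sub] at hftc
  linarith

theorem hasDerivAt_integral_of_continuousOn_Ioi {φ : ℝ → ℝ} {a c u : ℝ}
    (hφ : ContinuousOn φ (Ioi a)) (hc : a < c) (hu : a < u) :
    HasDerivAt (fun v => ∫ X in c..v, φ X) (φ u) u := by
  have hsub : uIcc c u ⊆ Ioi a := fun X hX => (lt_min hc hu).trans_le hX.1
  exact integral_hasDerivAt_right ((hφ.mono hsub).intervalIntegrable)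
    (hφ.stronglyMeasurableAtFilter isOpen_Ioi u hu) (hφ.continuousAt (isOpen_Ioi.mem_nhds hu))

theorem HasDerivWithinAt.sub_integral_comp {S φ : ℝ → ℝ} {s : Set ℝ} {a c y S' : ℝ}
    (hS : HasDerivWithinAt S S' s y) (hφ : ContinuousOn φ (Ioi a)) (hc : a < c) (hSy : a < S y) :
    HasDerivWithinAt (fun y => S y - c - ∫ X in c..S y, φ X) (S' * (1 - φ (S y))) s y := by
  refine ((hS.sub_const c).sub
    ((hasDerivAt_integral_of_continuousOn_Ioi hφ hc hSy).comp_hasDerivWithinAt y hS)).congr_deriv ?_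
  ring

theorem stmt_2_general (α t₀ t : ℝ) (hα1 : α < 1) (ht : t₀ < t)
    (S g : ℝ → ℝ)
    (hS : ContDiffOn ℝ 1 S (Set.Icc t₀ t))
    (hSpos : ∀ y ∈ Set.Icc t₀ t, 0 < S y)
    (hg_cont : ContinuousOn g (Set.Ioi 0))
    (hg_pos : ∀ x : ℝ, 0 < x → 0 < g x) :
    (1 / Real.Gamma (1 - α)) *
        ∫ y in t₀..t, deriv S y * (t - y) ^ (-α) * (1 - g (S t) / g (S y))
      = -((t - t₀) ^ (-α) / Real.Gamma (1 - α)) *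
            (S t₀ - S t - ∫ X in S t..S t₀, g (S t) / g X)
        - ∫ y in t₀..t, (α * (t - y) ^ (-(α + 1)) / Real.Gamma (1 - α)) *
            (S y - S t - ∫ X in S t..S y, g (S t) / g X) := by
  set S' := derivWithin S (Icc t₀ t)
  have hφ : ContinuousOn (fun X => g (S t) / g X) (Ioi 0) :=
    continuousOn_const.div hg_cont fun X hX => (hg_pos X hX).ne'
  have hS' (y) (hy : y ∈ Icc t₀ t) : HasDerivWithinAt S (S' y) (Icc t₀ t) y :=
    (hS.differentiableOn one_ne_zero y hy).hasDerivWithinAt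
  have hSt := hSpos t (right_mem_Icc.2 ht.le)
  have hparts := integral_mul_sub_rpow_eq_of_hasDerivWithinAt ht hα1
    (fun y hy => (hS' y hy).sub_integral_comp hφ hSt (hSpos y hy))
    ((hS.continuousOn_derivWithin (uniqueDiffOn_Icc ht) le_rfl).mul
      (continuousOn_const.sub (hφ.comp hS.continuousOn hSpos))) (by simp)
  have hLHS : ∫ y in t₀..t, deriv S y * (t - y) ^ (-α) * (1 - g (S t) / g (S y))
      = ∫ y in t₀..t, S' y * (1 - g (S t) / g (S y)) * (t - y) ^ (-α) := by
    refine integral_congr_Ioo_of_le ht.le fun y hy => ?_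
    rw [((hS' y (Ioo_subset_Icc_self hy)).hasDerivAt (Icc_mem_nhds hy.1 hy.2)).deriv]
    ring
  simp_rw [hLHS, hparts, div_mul_eq_mul_div, intervalIntegral.integral_div]
  ring

theorem stmt_2 (α t₀ t : ℝ) (hα0 : 0 < α) (hα1 : α < 1) (ht : t₀ < t)
    (S g : ℝ → ℝ)
    (hS : ContDiffOn ℝ 1 S (Set.Icc t₀ t))
    (hSpos : ∀ y ∈ Set.Icc t₀ t, 0 < S y)
    (hg_cont : ContinuousOn g (Set.Ioi 0))
    (hg_pos : ∀ x : ℝ, 0 < x → 0 < g x)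
    (hg_mono : StrictMonoOn g (Set.Ioi 0)) :
    (1 / Real.Gamma (1 - α)) *
        ∫ y in t₀..t, deriv S y * (t - y) ^ (-α) * (1 - g (S t) / g (S y))
      = -((t - t₀) ^ (-α) / Real.Gamma (1 - α)) *
            (S t₀ - S t - ∫ X in S t..S t₀, g (S t) / g X)
        - ∫ y in t₀..t, (α * (t - y) ^ (-(α + 1)) / Real.Gamma (1 - α)) *
            (S y - S t - ∫ X in S t..S y, g (S t) / g X) :=
  stmt_2_general α t₀ t hα1 ht S g hS hSpos hg_cont hg_pos
end

section
/- Let 0 < α < 1, let S : [t₀,T] → (0,∞) be continuously differentiable, let g : (0,∞) → (0,∞) be continuous and monotone increasing, and fix S_ref > 0. Define V(t) = S(t) − S_ref − ∫_{S_ref}^{S(t)} g(S_ref)/g(X) dX. Then for every t ∈ (t₀,T], the Caputo derivative of V of order α based at t₀ satisfies ᶜD^α V(t) ≤ (1 − g(S_ref)/g(S(t))) · ᶜD^α S(t). -/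
/-!
Write `V = W ∘ S` with `W y = y - S_ref - ∫_{S_ref}^y g(S_ref)/g`. Its derivative
`W' y = 1 - g(S_ref)/g(y)` is increasing, so `W` is convex. For any convex `C¹` function `W`,
`W'(S t) · ᶜD^α S(t) - ᶜD^α (W ∘ S)(t)` is `Γ(1-α)⁻¹ ∫_{t₀}^t G'(x) (t - x)^(-α) dx` with
`G x = W'(S t) (S x - S t) - (W (S x) - W (S t))`, which is `≤ 0` by the tangent-line inequality
and vanishes at `t`. Integrating by parts, the boundary term at `t` disappears since
`G x = O(t - x)`, and what remains is `-∫ G(x) · α (t - x)^(-α-1) dx ≥ 0`.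
-/

/-- The Caputo fractional derivative of order `α` (0 < α < 1) based at `t₀`:
`ᶜD^α φ(t) = (1/Γ(1−α)) ∫_{t₀}^{t} φ′(x)(t−x)^{−α} dx`. -/
noncomputable def caputo (α t₀ : ℝ) (φ : ℝ → ℝ) (t : ℝ) : ℝ :=
  (1 / Real.Gamma (1 - α)) * ∫ x in t₀..t, deriv φ x * (t - x) ^ (-α)

open Set MeasureTheory Filter Topology

lemma intervalIntegrable_sub_rpow_neg {α : ℝ} (hα : α < 1) (b c d : ℝ) :
    IntervalIntegrable (fun x => (b - x) ^ (-α)) volume c d := by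
  simpa using ((intervalIntegral.intervalIntegrable_rpow' (a := b - c) (b := b - d) (r := -α)
    (by linarith)).comp_sub_left b)

lemma ConvexOn.add_mul_sub_le_of_hasDerivAt {D : Set ℝ} {f : ℝ → ℝ} {f' x y : ℝ}
    (hf : ConvexOn ℝ D f) (hx : x ∈ D) (hy : y ∈ D) (hf' : HasDerivAt f f' x) :
    f x + f' * (y - x) ≤ f y := by
  rcases lt_trichotomy x y with hxy | rfl | hyx
  · have := hf.le_slope_of_hasDerivAt hx hy hxy hf'
    rw [slope_def_field, le_div_iff₀ (sub_pos.2 hxy)] at this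
    linarith
  · simp
  · have := hf.slope_le_of_hasDerivAt hy hx hyx hf'
    rw [slope_def_field, div_le_iff₀ (sub_pos.2 hyx)] at this
    linarith

lemma MonotoneOn.convexOn_of_hasDerivAt {D : Set ℝ} (hD : Convex ℝ D) {f f' : ℝ → ℝ}
    (hf : ∀ x ∈ D, HasDerivAt f (f' x) x) (hf' : MonotoneOn f' D) : ConvexOn ℝ D f :=
  MonotoneOn.convexOn_of_deriv hD
    (fun x hx => (hf x hx).continuousAt.continuousWithinAt)
    (fun x hx => (hf x (interior_subset hx)).differentiableAt.differentiableWithinAt)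
    ((hf'.mono interior_subset).congr fun x hx => ((hf x (interior_subset hx)).deriv).symm)

lemma caputo_eq_of_hasDerivAt {α t₀ t : ℝ} (ht : t₀ ≤ t) {φ φ' : ℝ → ℝ}
    (hφ : ∀ x ∈ Ioo t₀ t, HasDerivAt φ (φ' x) x) :
    caputo α t₀ φ t = 1 / Real.Gamma (1 - α) * ∫ x in t₀..t, φ' x * (t - x) ^ (-α) := by
  refine congrArg _ (intervalIntegral.integral_congr_ae ?_)
  filter_upwards [Measure.ae_ne volume t] with x hxt hx
  rw [uIoc_of_le ht] at hx
  rw [(hφ x ⟨hx.1, lt_of_le_of_ne hx.2 hxt⟩).deriv]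

lemma tendsto_mul_sub_rpow_neg_of_hasDerivWithinAt {a b α : ℝ} (hab : a ≤ b) (hα1 : α < 1)
    {G G' : ℝ → ℝ} (hG : ∀ x ∈ Icc a b, HasDerivWithinAt G (G' x) (Icc a b) x)
    (hG' : ContinuousOn G' (Icc a b)) (hGb : G b = 0) :
    Tendsto (fun x => G x * (b - x) ^ (-α)) (𝓝[Icc a b] b) (𝓝 0) := by
  obtain ⟨C, hC⟩ := isCompact_Icc.exists_bound_of_continuousOn hG'
  have hbound : ∀ x ∈ Icc a b, ‖G x * (b - x) ^ (-α)‖ ≤ C * (b - x) ^ (1 - α) := by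
    intro x hx
    have hbx : 0 ≤ b - x := sub_nonneg.2 hx.2
    have hGx : ‖G x‖ ≤ C * (b - x) := by
      simpa [hGb, abs_of_nonneg hbx, abs_sub_comm] using
        (convex_Icc a b).norm_image_sub_le_of_norm_hasDerivWithin_le hG hC hx (right_mem_Icc.2 hab)
    calc ‖G x * (b - x) ^ (-α)‖ = ‖G x‖ * (b - x) ^ (-α) := by
          rw [norm_mul, Real.norm_of_nonneg (Real.rpow_nonneg hbx _)]
      _ ≤ C * (b - x) * (b - x) ^ (-α) := by gcongr
      _ = C * (b - x) ^ (1 - α) := by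
          rw [sub_eq_add_neg 1 α, Real.rpow_add' hbx (by linarith), Real.rpow_one, mul_assoc]
  have hlim : Tendsto (fun x => C * (b - x) ^ (1 - α)) (𝓝[Icc a b] b) (𝓝 0) := by
    have : ContinuousAt (fun x => C * (b - x) ^ (1 - α)) b :=
      continuousAt_const.mul ((continuousAt_const.sub continuousAt_id).rpow_const
        (Or.inr (by linarith)))
    simpa [Real.zero_rpow (by linarith : (1 : ℝ) - α ≠ 0)] using
      this.tendsto.mono_left nhdsWithin_le_nhds
  exact squeeze_zero_norm' (eventually_nhdsWithin_of_forall hbound) hlim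

lemma integral_deriv_mul_sub_rpow_neg_nonneg {a b α : ℝ} (hab : a ≤ b) (hα0 : 0 < α)
    (hα1 : α < 1) {G G' : ℝ → ℝ} (hG : ∀ x ∈ Icc a b, HasDerivWithinAt G (G' x) (Icc a b) x)
    (hG' : ContinuousOn G' (Icc a b)) (hG_nonpos : ∀ x ∈ Icc a b, G x ≤ 0) (hGb : G b = 0) :
    0 ≤ ∫ x in a..b, G' x * (b - x) ^ (-α) := by
  set F : ℝ → ℝ := fun x => G x * (b - x) ^ (-α)
  have hF_cont : ContinuousOn F (Icc a b) := by
    intro x hx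
    rcases hx.2.lt_or_eq with hxb | rfl
    · exact (hG x hx).continuousWithinAt.mul ((continuousAt_const.sub continuousAt_id).rpow_const
        (Or.inl (sub_ne_zero.2 hxb.ne'))).continuousWithinAt
    · have hFb : F x = 0 := by simp [F, hGb]
      rw [ContinuousWithinAt, hFb]
      exact tendsto_mul_sub_rpow_neg_of_hasDerivWithinAt hab hα1 hG hG' hGb
  have hF_deriv : ∀ x ∈ Ioo a b, HasDerivWithinAt F
      (G' x * (b - x) ^ (-α) + G x * (α * (b - x) ^ (-α - 1))) (Ioi x) x := by
    intro x hx
    have hGx := (hG x (Ioo_subset_Icc_self hx)).hasDerivAt (Icc_mem_nhds hx.1 hx.2)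
    have hw := ((hasDerivAt_id x).const_sub b).rpow_const (p := -α)
      (Or.inl (sub_ne_zero.2 hx.2.ne'))
    exact ((hGx.mul hw).congr_deriv (by simp only [id]; ring)).hasDerivWithinAt
  have h_int : IntegrableOn (fun x => G' x * (b - x) ^ (-α)) (Icc a b) := by
    rw [← intervalIntegrable_iff_integrableOn_Icc_of_le hab]
    exact (intervalIntegrable_sub_rpow_neg hα1 b a b).continuousOn_mul (by rwa [uIcc_of_le hab])
  have h_le : ∀ x ∈ Ioo a b,
      G' x * (b - x) ^ (-α) + G x * (α * (b - x) ^ (-α - 1)) ≤ G' x * (b - x) ^ (-α) := by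
    intro x hx
    have hbx : 0 ≤ b - x := sub_nonneg.2 hx.2.le
    exact add_le_of_nonpos_right (mul_nonpos_of_nonpos_of_nonneg
      (hG_nonpos x (Ioo_subset_Icc_self hx)) (by positivity))
  -- FTC in the form `F b - F a ≤ ∫ φ` for `F' ≤ φ`: the singular term
  -- `G x * (α * (b - x) ^ (-α - 1))` of `F'` is never integrated.
  have h_ftc :=
    intervalIntegral.sub_le_integral_of_hasDeriv_right_of_le hab hF_cont hF_deriv h_int h_le
  have hFa : F a ≤ 0 := mul_nonpos_of_nonpos_of_nonneg (hG_nonpos a (left_mem_Icc.2 hab))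
    (Real.rpow_nonneg (sub_nonneg.2 hab) _)
  have hFb : F b = 0 := by simp [F, hGb]
  linarith

theorem caputo_comp_le_of_convexOn {α t₀ t : ℝ} (hα0 : 0 < α) (hα1 : α < 1) (ht : t₀ < t)
    {D : Set ℝ} {W W' S : ℝ → ℝ} (hW : ConvexOn ℝ D W) (hW' : ∀ y ∈ D, HasDerivAt W (W' y) y)
    (hW'_cont : ContinuousOn W' D) (hS : ContDiffOn ℝ 1 S (Icc t₀ t))
    (hSD : MapsTo S (Icc t₀ t) D) :
    caputo α t₀ (fun τ => W (S τ)) t ≤ W' (S t) * caputo α t₀ S t := by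
  set S' := derivWithin S (Icc t₀ t)
  have hS' : ∀ x ∈ Icc t₀ t, HasDerivWithinAt S (S' x) (Icc t₀ t) x := fun x hx =>
    (hS.differentiableOn one_ne_zero x hx).hasDerivWithinAt
  have hS'_cont : ContinuousOn S' (Icc t₀ t) :=
    hS.continuousOn_derivWithin (uniqueDiffOn_Icc ht) le_rfl
  have hS'_at : ∀ x ∈ Ioo t₀ t, HasDerivAt S (S' x) x := fun x hx =>
    (hS' x (Ioo_subset_Icc_self hx)).hasDerivAt (Icc_mem_nhds hx.1 hx.2)
  have htD : S t ∈ D := hSD (right_mem_Icc.2 ht.le)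
  set G : ℝ → ℝ := fun x => W' (S t) * (S x - S t) - (W (S x) - W (S t))
  have hG : ∀ x ∈ Icc t₀ t,
      HasDerivWithinAt G ((W' (S t) - W' (S x)) * S' x) (Icc t₀ t) x := fun x hx =>
    ((((hS' x hx).sub_const (S t)).const_mul (W' (S t))).sub
      (((hW' (S x) (hSD hx)).comp_hasDerivWithinAt x (hS' x hx)).sub_const (W (S t)))).congr_deriv
      (by ring)
  have hG_nonpos : ∀ x ∈ Icc t₀ t, G x ≤ 0 := fun x hx => by
    have := hW.add_mul_sub_le_of_hasDerivAt htD (hSD hx) (hW' _ htD)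
    linarith
  have hWS'_cont : ContinuousOn (fun x => W' (S x)) (Icc t₀ t) :=
    hW'_cont.comp hS.continuousOn hSD
  have key := integral_deriv_mul_sub_rpow_neg_nonneg ht.le hα0 hα1 hG
    ((continuousOn_const.sub hWS'_cont).mul hS'_cont) hG_nonpos (by simp [G])
  have hint : ∀ {φ : ℝ → ℝ}, ContinuousOn φ (Icc t₀ t) →
      IntervalIntegrable (fun x => φ x * (t - x) ^ (-α)) volume t₀ t := fun hφ =>
    (intervalIntegrable_sub_rpow_neg hα1 t t₀ t).continuousOn_mul (by rwa [uIcc_of_le ht.le])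
  rw [caputo_eq_of_hasDerivAt (φ := fun τ => W (S τ)) ht.le fun x hx =>
      (hW' _ (hSD (Ioo_subset_Icc_self hx))).comp x (hS'_at x hx),
    caputo_eq_of_hasDerivAt ht.le hS'_at, mul_left_comm]
  refine mul_le_mul_of_nonneg_left ?_
    (by have := Real.Gamma_pos_of_pos (sub_pos.2 hα1); positivity)
  rw [← intervalIntegral.integral_const_mul, ← sub_nonneg,
    ← intervalIntegral.integral_sub ((hint hS'_cont).const_mul _)
      (hint (φ := fun x => W' (S x) * S' x) (hWS'_cont.mul hS'_cont))]
  exact key.trans_eq (intervalIntegral.integral_congr fun x _ => by ring)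

theorem stmt_4_general (α t₀ T S_ref : ℝ) (hα0 : 0 < α) (hα1 : α < 1)
    (hSref : 0 < S_ref)
    (S g : ℝ → ℝ)
    (hS : ContDiffOn ℝ 1 S (Set.Icc t₀ T))
    (hSpos : ∀ y ∈ Set.Icc t₀ T, 0 < S y)
    (hg_cont : ContinuousOn g (Set.Ioi 0))
    (hg_pos : ∀ x : ℝ, 0 < x → 0 < g x)
    (hg_mono : StrictMonoOn g (Set.Ioi 0)) :
    ∀ t ∈ Set.Ioc t₀ T,
      caputo α t₀ (fun τ => S τ - S_ref - ∫ X in S_ref..S τ, g S_ref / g X) t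
        ≤ (1 - g S_ref / g (S t)) * caputo α t₀ S t := by
  rintro t ⟨ht₀, htT⟩
  have hf_cont : ContinuousOn (fun X => g S_ref / g X) (Ioi 0) :=
    continuousOn_const.div hg_cont fun x hx => (hg_pos x hx).ne'
  have hW' : ∀ y ∈ Ioi (0 : ℝ), HasDerivAt (fun y => y - S_ref - ∫ X in S_ref..y, g S_ref / g X)
      (1 - g S_ref / g y) y := fun y hy =>
    ((hasDerivAt_id y).sub_const S_ref).sub (intervalIntegral.integral_hasDerivAt_right
      (hf_cont.mono (ordConnected_Ioi.uIcc_subset hSref hy)).intervalIntegrable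
      (hf_cont.stronglyMeasurableAtFilter isOpen_Ioi y hy)
      (hf_cont.continuousAt (isOpen_Ioi.mem_nhds hy)))
  have hW'_mono : MonotoneOn (fun y => 1 - g S_ref / g y) (Ioi 0) := fun x hx y hy hxy =>
    sub_le_sub_left (div_le_div_of_nonneg_left (hg_pos _ hSref).le (hg_pos x hx)
      (hg_mono.monotoneOn hx hy hxy)) 1
  exact caputo_comp_le_of_convexOn hα0 hα1 ht₀
    (hW'_mono.convexOn_of_hasDerivAt (convex_Ioi 0) hW') hW' (continuousOn_const.sub hf_cont)
    (hS.mono (Icc_subset_Icc_right htT)) fun x hx => hSpos x ⟨hx.1, hx.2.trans htT⟩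

theorem stmt_4 (α t₀ T S_ref : ℝ) (hα0 : 0 < α) (hα1 : α < 1) (hT : t₀ < T)
    (hSref : 0 < S_ref)
    (S g : ℝ → ℝ)
    (hS : ContDiffOn ℝ 1 S (Set.Icc t₀ T))
    (hSpos : ∀ y ∈ Set.Icc t₀ T, 0 < S y)
    (hg_cont : ContinuousOn g (Set.Ioi 0))
    (hg_pos : ∀ x : ℝ, 0 < x → 0 < g x)
    (hg_mono : StrictMonoOn g (Set.Ioi 0)) :
    ∀ t ∈ Set.Ioc t₀ T,
      caputo α t₀ (fun τ => S τ - S_ref - ∫ X in S_ref..S τ, g S_ref / g X) t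
        ≤ (1 - g S_ref / g (S t)) * caputo α t₀ S t :=
  stmt_4_general α t₀ T S_ref hα0 hα1 hSref S g hS hSpos hg_cont hg_pos hg_mono
end

section
/- Assume the SICA parameters are positive and the incidence function f satisfies (H1)–(H3). Then for all S, I, C, A > 0: (1 − f(S₀,0)/f(S,0))·(Λ − μS − f(S,I)I) + (f(S,I)I − ξ₁I + σA + ωC) + (ω/ξ₂)(φI − ξ₂C) + (σ/ξ₃)(ρI − ξ₃A) ≤ μ(1 − f(S₀,0)/f(S,0))(S₀ − S) + (𝒟/(ξ₂ξ₃)) I (R₀ − 1). Moreover, if R₀ ≤ 1 the left-hand side is ≤ 0. -/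
/-!
Since ω C and σ A cancel, the left-hand side equals
μ(1 − f(S₀,0)/f(S,0))(S₀ − S) + (𝒟/(ξ₂ξ₃)) I (R₀ − 1) − f(S₀,0)(1 − f(S,I)/f(S,0)) I,
where 𝒟/(ξ₂ξ₃) = ξ₁ − ωφ/ξ₂ − σρ/ξ₃ is the net removal rate of the infected compartments.
By (H3), f(S,I) ≤ f(S,0), so the last term is nonpositive. By (H1) and (H2), S ↦ f(S,0) is
increasing and positive on (0,∞), so the first term is nonpositive too, and the second is
nonpositive when R₀ ≤ 1.
-/

open Set

lemma sub_mul_sub_nonpos_of_monotoneOn {h : ℝ → ℝ} {s : Set ℝ} (hh : MonotoneOn h s)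
    {x y : ℝ} (hx : x ∈ s) (hy : y ∈ s) : (h x - h y) * (y - x) ≤ 0 := by
  rcases le_total x y with hxy | hyx
  · exact mul_nonpos_of_nonpos_of_nonneg (sub_nonpos.2 (hh hx hy hxy)) (sub_nonneg.2 hxy)
  · exact mul_nonpos_of_nonneg_of_nonpos (sub_nonneg.2 (hh hy hx hyx)) (sub_nonpos.2 hyx)

lemma one_sub_div_mul_sub_nonpos_of_monotoneOn {h : ℝ → ℝ} {s : Set ℝ} (hh : MonotoneOn h s)
    {x y : ℝ} (hx : x ∈ s) (hy : y ∈ s) (hpos : 0 < h x) : (1 - h y / h x) * (y - x) ≤ 0 := by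
  rw [one_sub_div hpos.ne', div_mul_eq_mul_div]
  exact div_nonpos_of_nonpos_of_nonneg (sub_mul_sub_nonpos_of_monotoneOn hh hx hy) hpos.le

section Incidence

variable {f : ℝ → ℝ → ℝ}
  (hcont : ContinuousOn (fun p : ℝ × ℝ => f p.1 p.2) (Ici 0 ×ˢ Ici 0))
include hcont

lemma strictMonoOn_incidence_left
    (hderiv : ∀ S I : ℝ, 0 < S → 0 ≤ I → 0 < deriv (fun s => f s I) S) {I : ℝ} (hI : 0 ≤ I) :
    StrictMonoOn (fun s => f s I) (Ici 0) :=
  strictMonoOn_of_deriv_pos (convex_Ici 0) (hcont.uncurry_right (f := f) I hI) fun S hS =>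
    hderiv S I (by rwa [interior_Ici] at hS) hI

lemma antitoneOn_incidence_right
    (hdiff : ContDiffOn ℝ 1 (fun p : ℝ × ℝ => f p.1 p.2) (Ioi 0 ×ˢ Ioi 0))
    (hderiv : ∀ S I : ℝ, 0 ≤ S → 0 ≤ I → deriv (fun i => f S i) I ≤ 0) {S : ℝ} (hS : 0 < S) :
    AntitoneOn (f S) (Ici 0) := by
  refine antitoneOn_of_deriv_nonpos (convex_Ici 0) (hcont.uncurry_left (f := f) S hS.le) ?_ ?_
  · rw [interior_Ici]
    exact (hdiff.differentiableOn one_ne_zero).comp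
      ((differentiableOn_const S).prodMk differentiableOn_id) fun i hi => ⟨hS, hi⟩
  · intro i hi
    rw [interior_Ici] at hi
    exact hderiv S i hS.le hi.le

end Incidence

lemma sica_lyapunov_eq {Λ μ ρ φ σ ω d ξ₁ ξ₂ ξ₃ D S₀ R₀ g a b S I C A : ℝ}
    (hμ : μ ≠ 0) (hξ₂₀ : ξ₂ ≠ 0) (hξ₃₀ : ξ₃ ≠ 0) (hD₀ : D ≠ 0)
    (hξ₁ : ξ₁ = ρ + φ + μ) (hξ₂ : ξ₂ = ω + μ) (hξ₃ : ξ₃ = σ + μ + d)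
    (hD : D = μ * (ξ₂ * (ξ₃ + ρ) + φ * ξ₃ + ρ * d) + ρ * ω * d)
    (hS₀ : S₀ = Λ / μ) (hR₀ : R₀ = g * ξ₂ * ξ₃ / D) :
    (1 - g / a) * (Λ - μ * S - b * I) + (b * I - ξ₁ * I + σ * A + ω * C)
        + (ω / ξ₂) * (φ * I - ξ₂ * C) + (σ / ξ₃) * (ρ * I - ξ₃ * A)
      = μ * (1 - g / a) * (S₀ - S) + (D / (ξ₂ * ξ₃)) * I * (R₀ - 1) - g * (1 - b / a) * I := by
  have hrate : D / (ξ₂ * ξ₃) = ξ₁ - ω * φ / ξ₂ - σ * ρ / ξ₃ := by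
    rw [div_eq_iff (mul_ne_zero hξ₂₀ hξ₃₀), hD, hξ₁]
    field_simp
    rw [hξ₂, hξ₃]
    ring
  have hR₀D : D / (ξ₂ * ξ₃) * R₀ = g := by
    rw [hR₀]
    field_simp
  have hinfection : D / (ξ₂ * ξ₃) * I * (R₀ - 1) = g * I - (ξ₁ - ω * φ / ξ₂ - σ * ρ / ξ₃) * I := by
    linear_combination I * hR₀D - I * hrate
  rw [hinfection, hS₀]
  field_simp
  ring

theorem stmt_6_general (Λ μ ρ φ σ ω d ξ₁ ξ₂ ξ₃ D S₀ R₀ : ℝ)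
    (hΛ : 0 < Λ) (hμ : 0 < μ) (hρ : 0 < ρ) (hφ : 0 < φ) (hσ : 0 < σ)
    (hω : 0 < ω) (hd : 0 < d)
    (hξ₁ : ξ₁ = ρ + φ + μ) (hξ₂ : ξ₂ = ω + μ) (hξ₃ : ξ₃ = σ + μ + d)
    (hD : D = μ * (ξ₂ * (ξ₃ + ρ) + φ * ξ₃ + ρ * d) + ρ * ω * d)
    (hS₀ : S₀ = Λ / μ)
    (f : ℝ → ℝ → ℝ)
    (hR₀ : R₀ = f S₀ 0 * ξ₂ * ξ₃ / D)
    (hf_cont : ContinuousOn (fun p : ℝ × ℝ => f p.1 p.2) (Set.Ici 0 ×ˢ Set.Ici 0))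
    (hf_cd : ContDiffOn ℝ 1 (fun p : ℝ × ℝ => f p.1 p.2) (Set.Ioi 0 ×ˢ Set.Ioi 0))
    (hH1 : ∀ I : ℝ, 0 ≤ I → f 0 I = 0)
    (hH2 : ∀ S I : ℝ, 0 < S → 0 ≤ I → 0 < deriv (fun s => f s I) S)
    (hH3 : ∀ S I : ℝ, 0 ≤ S → 0 ≤ I → deriv (fun i => f S i) I ≤ 0) :
    ∀ S I C A : ℝ, 0 < S → 0 < I → 0 < C → 0 < A →
      ((1 - f S₀ 0 / f S 0) * (Λ - μ * S - f S I * I)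
          + (f S I * I - ξ₁ * I + σ * A + ω * C)
          + (ω / ξ₂) * (φ * I - ξ₂ * C)
          + (σ / ξ₃) * (ρ * I - ξ₃ * A)
        ≤ μ * (1 - f S₀ 0 / f S 0) * (S₀ - S) + (D / (ξ₂ * ξ₃)) * I * (R₀ - 1))
      ∧ (R₀ ≤ 1 →
          (1 - f S₀ 0 / f S 0) * (Λ - μ * S - f S I * I)
            + (f S I * I - ξ₁ * I + σ * A + ω * C)
            + (ω / ξ₂) * (φ * I - ξ₂ * C)
            + (σ / ξ₃) * (ρ * I - ξ₃ * A) ≤ 0) := by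
  intro S I C A hS hI hC hA
  have hξ₂_pos : 0 < ξ₂ := by rw [hξ₂]; positivity
  have hξ₃_pos : 0 < ξ₃ := by rw [hξ₃]; positivity
  have hD_pos : 0 < D := by rw [hD]; positivity
  have hS₀_pos : 0 < S₀ := by rw [hS₀]; positivity
  have hmono := strictMonoOn_incidence_left hf_cont hH2 le_rfl
  have hf_zero : f 0 0 = 0 := hH1 0 le_rfl
  have hfS_pos : 0 < f S 0 := hf_zero.symm.trans_lt (hmono self_mem_Ici hS.le hS)
  have hfS₀_nonneg : 0 ≤ f S₀ 0 :=
    hf_zero.symm.trans_le (hmono.monotoneOn self_mem_Ici hS₀_pos.le hS₀_pos.le)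
  have hfSI_le : f S I ≤ f S 0 :=
    antitoneOn_incidence_right hf_cont hf_cd hH3 hS self_mem_Ici hI.le hI.le
  rw [sica_lyapunov_eq hμ.ne' hξ₂_pos.ne' hξ₃_pos.ne' hD_pos.ne' hξ₁ hξ₂ hξ₃ hD hS₀ hR₀]
  have hsaturation : 0 ≤ f S₀ 0 * (1 - f S I / f S 0) * I := by
    have : f S I / f S 0 ≤ 1 := (div_le_one hfS_pos).2 hfSI_le
    have : 0 ≤ 1 - f S I / f S 0 := by linarith
    positivity
  refine ⟨sub_le_self _ hsaturation, fun hR₀_le => ?_⟩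
  have hsusceptible : μ * (1 - f S₀ 0 / f S 0) * (S₀ - S) ≤ 0 := by
    rw [mul_assoc]
    exact mul_nonpos_of_nonneg_of_nonpos hμ.le <|
      one_sub_div_mul_sub_nonpos_of_monotoneOn hmono.monotoneOn hS.le hS₀_pos.le hfS_pos
  have hinfected : D / (ξ₂ * ξ₃) * I * (R₀ - 1) ≤ 0 :=
    mul_nonpos_of_nonneg_of_nonpos (by positivity) (by linarith)
  linarith

theorem stmt_6 (Λ μ ρ φ σ ω d ξ₁ ξ₂ ξ₃ D S₀ R₀ : ℝ)
    (hΛ : 0 < Λ) (hμ : 0 < μ) (hρ : 0 < ρ) (hφ : 0 < φ) (hσ : 0 < σ)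
    (hω : 0 < ω) (hd : 0 < d)
    (hξ₁ : ξ₁ = ρ + φ + μ) (hξ₂ : ξ₂ = ω + μ) (hξ₃ : ξ₃ = σ + μ + d)
    (hD : D = μ * (ξ₂ * (ξ₃ + ρ) + φ * ξ₃ + ρ * d) + ρ * ω * d)
    (hS₀ : S₀ = Λ / μ)
    (f : ℝ → ℝ → ℝ)
    (hR₀ : R₀ = f S₀ 0 * ξ₂ * ξ₃ / D)
    (hf_nonneg : ∀ S I : ℝ, 0 ≤ S → 0 ≤ I → 0 ≤ f S I)
    (hf_cont : ContinuousOn (fun p : ℝ × ℝ => f p.1 p.2) (Set.Ici 0 ×ˢ Set.Ici 0))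
    (hf_cd : ContDiffOn ℝ 1 (fun p : ℝ × ℝ => f p.1 p.2) (Set.Ioi 0 ×ˢ Set.Ioi 0))
    (hH1 : ∀ I : ℝ, 0 ≤ I → f 0 I = 0)
    (hH2 : ∀ S I : ℝ, 0 < S → 0 ≤ I → 0 < deriv (fun s => f s I) S)
    (hH3 : ∀ S I : ℝ, 0 ≤ S → 0 ≤ I → deriv (fun i => f S i) I ≤ 0) :
    ∀ S I C A : ℝ, 0 < S → 0 < I → 0 < C → 0 < A →
      ((1 - f S₀ 0 / f S 0) * (Λ - μ * S - f S I * I)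
          + (f S I * I - ξ₁ * I + σ * A + ω * C)
          + (ω / ξ₂) * (φ * I - ξ₂ * C)
          + (σ / ξ₃) * (ρ * I - ξ₃ * A)
        ≤ μ * (1 - f S₀ 0 / f S 0) * (S₀ - S) + (D / (ξ₂ * ξ₃)) * I * (R₀ - 1))
      ∧ (R₀ ≤ 1 →
          (1 - f S₀ 0 / f S 0) * (Λ - μ * S - f S I * I)
            + (f S I * I - ξ₁ * I + σ * A + ω * C)
            + (ω / ξ₂) * (φ * I - ξ₂ * C)
            + (σ / ξ₃) * (ρ * I - ξ₃ * A) ≤ 0) :=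
  stmt_6_general Λ μ ρ φ σ ω d ξ₁ ξ₂ ξ₃ D S₀ R₀ hΛ hμ hρ hφ hσ hω hd hξ₁ hξ₂ hξ₃ hD hS₀ f hR₀
    hf_cont hf_cd hH1 hH2 hH3
end

section
/- Assume the SICA parameters are positive and the incidence function f satisfies (H1)–(H3). If R₀ ≤ 1, then the only solution (S,I,C,A) of the equilibrium system with S, I, C, A ≥ 0 is the disease-free equilibrium E_f = (Λ/μ, 0, 0, 0). -/
/-!
At an endemic equilibrium (`I > 0`) the three linear equations force `f S I · ξ₂ξ₃ = 𝒟 > 0`;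
then `f S I > 0 = f 0 I` gives `S > 0`, and `Λ = μS + f(S,I)·I` gives `S < S₀`. Monotonicity of
`f` (decreasing in `I`, strictly increasing in `S`) yields `f S I < f S₀ 0`, i.e.
`𝒟 < f S₀ 0 · ξ₂ξ₃`, so `R₀ > 1`.
-/

open Set

lemma continuousOn_curry_left {f : ℝ → ℝ → ℝ} {s t : Set ℝ}
    (hf : ContinuousOn (fun p : ℝ × ℝ => f p.1 p.2) (s ×ˢ t)) {x : ℝ} (hx : x ∈ s) :
    ContinuousOn (fun y => f x y) t :=
  hf.comp (continuous_const.prodMk continuous_id).continuousOn fun _ hy => ⟨hx, hy⟩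

lemma continuousOn_curry_right {f : ℝ → ℝ → ℝ} {s t : Set ℝ}
    (hf : ContinuousOn (fun p : ℝ × ℝ => f p.1 p.2) (s ×ˢ t)) {y : ℝ} (hy : y ∈ t) :
    ContinuousOn (fun x => f x y) s :=
  hf.comp (continuous_id.prodMk continuous_const).continuousOn fun _ hx => ⟨hx, hy⟩

lemma differentiableAt_curry_left {f : ℝ → ℝ → ℝ} {s t : Set ℝ}
    (hf : ContDiffOn ℝ 1 (fun p : ℝ × ℝ => f p.1 p.2) (s ×ˢ t)) (hs : IsOpen s) (ht : IsOpen t)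
    {x y : ℝ} (hx : x ∈ s) (hy : y ∈ t) :
    DifferentiableAt ℝ (fun y => f x y) y :=
  ((hf.differentiableOn one_ne_zero).differentiableAt ((hs.prod ht).mem_nhds ⟨hx, hy⟩)).comp y
    ((differentiableAt_const x).prodMk differentiableAt_id)

lemma antitoneOn_incidence_of_deriv_nonpos {f : ℝ → ℝ → ℝ}
    (hf_cont : ContinuousOn (fun p : ℝ × ℝ => f p.1 p.2) (Ici 0 ×ˢ Ici 0))
    (hf_cd : ContDiffOn ℝ 1 (fun p : ℝ × ℝ => f p.1 p.2) (Ioi 0 ×ˢ Ioi 0))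
    (hH3 : ∀ S I : ℝ, 0 ≤ S → 0 ≤ I → deriv (fun i => f S i) I ≤ 0) {S : ℝ} (hS : 0 < S) :
    AntitoneOn (fun i => f S i) (Ici 0) := by
  refine antitoneOn_of_deriv_nonpos (convex_Ici 0)
    (continuousOn_curry_left hf_cont (mem_Ici.2 hS.le)) ?_ ?_ <;> rw [interior_Ici]
  · exact fun i hi => (differentiableAt_curry_left hf_cd isOpen_Ioi isOpen_Ioi hS hi)
      |>.differentiableWithinAt
  · exact fun i hi => hH3 S i hS.le (le_of_lt hi)

lemma strictMonoOn_incidence_of_deriv_pos {f : ℝ → ℝ → ℝ}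
    (hf_cont : ContinuousOn (fun p : ℝ × ℝ => f p.1 p.2) (Ici 0 ×ˢ Ici 0))
    (hH2 : ∀ S I : ℝ, 0 < S → 0 ≤ I → 0 < deriv (fun s => f s I) S) {I : ℝ} (hI : 0 ≤ I) :
    StrictMonoOn (fun s => f s I) (Ici 0) := by
  refine strictMonoOn_of_deriv_pos (convex_Ici 0)
    (continuousOn_curry_right hf_cont (mem_Ici.2 hI)) ?_
  rw [interior_Ici]
  exact fun s hs => hH2 s I hs hI

lemma incidence_mul_eq_of_endemic {μ ρ φ σ ω d ξ₁ ξ₂ ξ₃ β I C A : ℝ}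
    (hξ₁ : ξ₁ = ρ + φ + μ) (hξ₂ : ξ₂ = ω + μ) (hξ₃ : ξ₃ = σ + μ + d) (hI : I ≠ 0)
    (eI : β * I - ξ₁ * I + σ * A + ω * C = 0) (eC : φ * I - ξ₂ * C = 0)
    (eA : ρ * I - ξ₃ * A = 0) :
    β * (ξ₂ * ξ₃) = μ * (ξ₂ * (ξ₃ + ρ) + φ * ξ₃ + ρ * d) + ρ * ω * d := by
  subst hξ₁ hξ₂ hξ₃
  refine mul_right_cancel₀ hI ?_
  linear_combination (ω + μ) * (σ + μ + d) * eI + ω * (σ + μ + d) * eC + σ * (ω + μ) * eA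

theorem stmt_8_general (Λ μ ρ φ σ ω d ξ₁ ξ₂ ξ₃ D S₀ R₀ : ℝ)
    (hμ : 0 < μ) (hρ : 0 < ρ) (hφ : 0 < φ) (hσ : 0 < σ)
    (hω : 0 < ω) (hd : 0 < d)
    (hξ₁ : ξ₁ = ρ + φ + μ) (hξ₂ : ξ₂ = ω + μ) (hξ₃ : ξ₃ = σ + μ + d)
    (hD : D = μ * (ξ₂ * (ξ₃ + ρ) + φ * ξ₃ + ρ * d) + ρ * ω * d)
    (hS₀ : S₀ = Λ / μ)
    (f : ℝ → ℝ → ℝ)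
    (hR₀def : R₀ = f S₀ 0 * ξ₂ * ξ₃ / D)
    (hR₀ : R₀ ≤ 1)
    (hf_cont : ContinuousOn (fun p : ℝ × ℝ => f p.1 p.2) (Set.Ici 0 ×ˢ Set.Ici 0))
    (hf_cd : ContDiffOn ℝ 1 (fun p : ℝ × ℝ => f p.1 p.2) (Set.Ioi 0 ×ˢ Set.Ioi 0))
    (hH1 : ∀ I : ℝ, 0 ≤ I → f 0 I = 0)
    (hH2 : ∀ S I : ℝ, 0 < S → 0 ≤ I → 0 < deriv (fun s => f s I) S)
    (hH3 : ∀ S I : ℝ, 0 ≤ S → 0 ≤ I → deriv (fun i => f S i) I ≤ 0) :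
    ∀ S I C A : ℝ, 0 ≤ S → 0 ≤ I → 0 ≤ C → 0 ≤ A →
      Λ - μ * S - f S I * I = 0 →
      f S I * I - ξ₁ * I + σ * A + ω * C = 0 →
      φ * I - ξ₂ * C = 0 →
      ρ * I - ξ₃ * A = 0 →
      S = Λ / μ ∧ I = 0 ∧ C = 0 ∧ A = 0 := by
  intro S I C A hS hI hC hA eS eI eC eA
  have hξ₂pos : 0 < ξ₂ := by rw [hξ₂]; positivity
  have hξ₃pos : 0 < ξ₃ := by rw [hξ₃]; positivity
  have hDpos : 0 < D := by rw [hD, hξ₂, hξ₃]; positivity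
  obtain rfl | hI := hI.eq_or_lt
  · refine ⟨by field_simp; linarith, rfl, ?_, ?_⟩ <;> nlinarith
  have hkey : f S I * (ξ₂ * ξ₃) = D :=
    hD ▸ incidence_mul_eq_of_endemic hξ₁ hξ₂ hξ₃ hI.ne' eI eC eA
  have hfpos : 0 < f S I := pos_of_mul_pos_left (hkey ▸ hDpos) (by positivity)
  have hSpos : 0 < S := hS.lt_of_ne fun h => by simp [← h, hH1 I hI.le] at hfpos
  have hSlt : S < S₀ := by
    rw [hS₀, lt_div_iff₀ hμ]
    linarith [mul_pos hfpos hI]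
  have hf_lt : f S I < f S₀ 0 := calc
    f S I ≤ f S 0 := antitoneOn_incidence_of_deriv_nonpos hf_cont hf_cd hH3 hSpos
      (mem_Ici.2 le_rfl) (mem_Ici.2 hI.le) hI.le
    _ < f S₀ 0 := strictMonoOn_incidence_of_deriv_pos hf_cont hH2 le_rfl
      (mem_Ici.2 hS) (mem_Ici.2 (hS.trans hSlt.le)) hSlt
  rw [hR₀def, div_le_one hDpos] at hR₀
  nlinarith [mul_pos hξ₂pos hξ₃pos]

theorem stmt_8 (Λ μ ρ φ σ ω d ξ₁ ξ₂ ξ₃ D S₀ R₀ : ℝ)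
    (hΛ : 0 < Λ) (hμ : 0 < μ) (hρ : 0 < ρ) (hφ : 0 < φ) (hσ : 0 < σ)
    (hω : 0 < ω) (hd : 0 < d)
    (hξ₁ : ξ₁ = ρ + φ + μ) (hξ₂ : ξ₂ = ω + μ) (hξ₃ : ξ₃ = σ + μ + d)
    (hD : D = μ * (ξ₂ * (ξ₃ + ρ) + φ * ξ₃ + ρ * d) + ρ * ω * d)
    (hS₀ : S₀ = Λ / μ)
    (f : ℝ → ℝ → ℝ)
    (hR₀def : R₀ = f S₀ 0 * ξ₂ * ξ₃ / D)
    (hR₀ : R₀ ≤ 1)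
    (hf_nonneg : ∀ S I : ℝ, 0 ≤ S → 0 ≤ I → 0 ≤ f S I)
    (hf_cont : ContinuousOn (fun p : ℝ × ℝ => f p.1 p.2) (Set.Ici 0 ×ˢ Set.Ici 0))
    (hf_cd : ContDiffOn ℝ 1 (fun p : ℝ × ℝ => f p.1 p.2) (Set.Ioi 0 ×ˢ Set.Ioi 0))
    (hH1 : ∀ I : ℝ, 0 ≤ I → f 0 I = 0)
    (hH2 : ∀ S I : ℝ, 0 < S → 0 ≤ I → 0 < deriv (fun s => f s I) S)
    (hH3 : ∀ S I : ℝ, 0 ≤ S → 0 ≤ I → deriv (fun i => f S i) I ≤ 0) :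
    ∀ S I C A : ℝ, 0 ≤ S → 0 ≤ I → 0 ≤ C → 0 ≤ A →
      Λ - μ * S - f S I * I = 0 →
      f S I * I - ξ₁ * I + σ * A + ω * C = 0 →
      φ * I - ξ₂ * C = 0 →
      ρ * I - ξ₃ * A = 0 →
      S = Λ / μ ∧ I = 0 ∧ C = 0 ∧ A = 0 :=
  stmt_8_general Λ μ ρ φ σ ω d ξ₁ ξ₂ ξ₃ D S₀ R₀ hμ hρ hφ hσ hω hd hξ₁ hξ₂ hξ₃ hD hS₀ f hR₀def hR₀
    hf_cont hf_cd hH1 hH2 hH3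
end

section
/- Assume the SICA parameters are positive and the incidence function f satisfies (H1)–(H3). If R₀ > 1, then there exists a unique solution (S*, I*, C*, A*) of the equilibrium system with S* ∈ (0, Λ/μ), I* > 0, C* > 0 and A* > 0 (the endemic equilibrium). -/
/-!
Eliminating `C = φ I / ξ₂` and `A = ρ I / ξ₃`, an equilibrium with `I > 0` is exactly a solution
of `f(S, I) = k` and `μ S + k I = Λ`, where `k = ξ₁ - σρ/ξ₃ - ωφ/ξ₂ = 𝒟 / (ξ₂ ξ₃) > 0`.
Substituting `I = (Λ - μ S) / k` leaves the single equation `g(S) = k` for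
`g(S) = f(S, (Λ - μ S) / k)`, which is strictly increasing on `[0, Λ/μ]` because `f` increases
in `S` and decreases in `I` while `I` decreases in `S`. Since `g(0) = 0 < k < R₀ k = g(Λ/μ)`,
the intermediate value theorem gives a root in `(0, Λ/μ)`, unique by strict monotonicity.
-/

open Set

section Incidence

variable {f : ℝ → ℝ → ℝ}

theorem strictMonoOn_left_of_deriv_pos
    (hf : ContinuousOn (fun p : ℝ × ℝ => f p.1 p.2) (Ici 0 ×ˢ Ici 0)) {I : ℝ} (hI : 0 ≤ I)
    (hf' : ∀ S, 0 < S → 0 < deriv (fun s => f s I) S) :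
    StrictMonoOn (fun s => f s I) (Ici 0) := by
  refine strictMonoOn_of_deriv_pos (convex_Ici 0) ?_ ?_
  · exact hf.comp (by fun_prop : Continuous fun s : ℝ => (s, I)).continuousOn
      fun s hs => ⟨hs, hI⟩
  · rw [interior_Ici]
    exact hf'

theorem antitoneOn_right_of_deriv_nonpos
    (hf : ContinuousOn (fun p : ℝ × ℝ => f p.1 p.2) (Ici 0 ×ˢ Ici 0))
    (hf_diff : DifferentiableOn ℝ (fun p : ℝ × ℝ => f p.1 p.2) (Ioi 0 ×ˢ Ioi 0))
    {S : ℝ} (hS : 0 < S) (hf' : ∀ I, 0 < I → deriv (fun i => f S i) I ≤ 0) :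
    AntitoneOn (fun i => f S i) (Ici 0) := by
  refine antitoneOn_of_deriv_nonpos (convex_Ici 0) ?_ ?_ ?_
  · exact hf.comp (by fun_prop : Continuous fun i : ℝ => (S, i)).continuousOn
      fun i hi => ⟨hS.le, hi⟩
  · rw [interior_Ici]
    intro I hI
    have hfI : DifferentiableAt ℝ (fun p : ℝ × ℝ => f p.1 p.2) (S, I) :=
      hf_diff.differentiableAt (prod_mem_nhds (Ioi_mem_nhds hS) (Ioi_mem_nhds hI))
    exact (hfI.comp I (by fun_prop : DifferentiableAt ℝ (fun i : ℝ => (S, i)) I))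
      |>.differentiableWithinAt
  · rw [interior_Ici]
    exact hf'

theorem strictMonoOn_apply_of_antitoneOn {s : Set ℝ} {h : ℝ → ℝ}
    (hf_mono : ∀ I, 0 ≤ I → StrictMonoOn (fun S => f S I) (Ici 0))
    (hf_anti : ∀ S, 0 < S → AntitoneOn (fun I => f S I) (Ici 0))
    (hs : s ⊆ Ici 0) (hh : AntitoneOn h s) (hh_nonneg : MapsTo h s (Ici 0)) :
    StrictMonoOn (fun S => f S (h S)) s := by
  intro a ha b hb hab
  calc f a (h a) < f b (h a) := hf_mono _ (hh_nonneg ha) (hs ha) (hs hb) hab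
    _ ≤ f b (h b) :=
      hf_anti b ((hs ha).trans_lt hab) (hh_nonneg hb) (hh_nonneg ha) (hh ha hb hab.le)

theorem existsUnique_reduced_equilibrium
    (hf_cont : ContinuousOn (fun p : ℝ × ℝ => f p.1 p.2) (Ici 0 ×ˢ Ici 0))
    (hf_diff : DifferentiableOn ℝ (fun p : ℝ × ℝ => f p.1 p.2) (Ioi 0 ×ˢ Ioi 0))
    (hf_zero : ∀ I : ℝ, 0 ≤ I → f 0 I = 0)
    (hf_left : ∀ S I : ℝ, 0 < S → 0 ≤ I → 0 < deriv (fun s => f s I) S)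
    (hf_right : ∀ S I : ℝ, 0 ≤ S → 0 ≤ I → deriv (fun i => f S i) I ≤ 0)
    {Λ μ k : ℝ} (hΛ : 0 < Λ) (hμ : 0 < μ) (hk : 0 < k) (hk_lt : k < f (Λ / μ) 0) :
    ∃! S, S ∈ Ioo 0 (Λ / μ) ∧ f S ((Λ - μ * S) / k) = k := by
  have hI_nonneg : MapsTo (fun S => (Λ - μ * S) / k) (Icc 0 (Λ / μ)) (Ici 0) := fun S hS =>
    div_nonneg (sub_nonneg.2 ((le_div_iff₀' hμ).1 hS.2)) hk.le
  set g : ℝ → ℝ := fun S => f S ((Λ - μ * S) / k) with hg_def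
  have hg_mono : StrictMonoOn g (Icc 0 (Λ / μ)) :=
    strictMonoOn_apply_of_antitoneOn
      (fun I hI => strictMonoOn_left_of_deriv_pos hf_cont hI fun S hS => hf_left S I hS hI)
      (fun S hS => antitoneOn_right_of_deriv_nonpos hf_cont hf_diff hS
        fun I hI => hf_right S I hS.le hI.le)
      (fun S hS => hS.1) (fun a _ b _ hab => by gcongr) hI_nonneg
  have hg_cont : ContinuousOn g (Icc 0 (Λ / μ)) :=
    hf_cont.comp (by fun_prop : Continuous fun S => (S, (Λ - μ * S) / k)).continuousOn
      fun S hS => ⟨hS.1, hI_nonneg hS⟩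
  have hg_zero : g 0 = 0 := by
    simp only [hg_def, mul_zero, sub_zero]
    exact hf_zero _ (by positivity)
  have hg_top : g (Λ / μ) = f (Λ / μ) 0 := by
    simp only [hg_def, mul_div_cancel₀ Λ hμ.ne', sub_self, zero_div]
  obtain ⟨S, hS, hgS⟩ : k ∈ g '' Ioo 0 (Λ / μ) :=
    intermediate_value_Ioo (by positivity) hg_cont ⟨by rwa [hg_zero], by rwa [hg_top]⟩
  exact ⟨S, ⟨hS, hgS⟩, fun S' ⟨hS', hgS'⟩ =>
    hg_mono.injOn (Ioo_subset_Icc_self hS') (Ioo_subset_Icc_self hS) (hgS'.trans hgS.symm)⟩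

end Incidence

theorem sica_removal_rate_eq {μ ρ φ σ ω d ξ₁ ξ₂ ξ₃ D : ℝ}
    (hξ₁ : ξ₁ = ρ + φ + μ) (hξ₂ : ξ₂ = ω + μ) (hξ₃ : ξ₃ = σ + μ + d)
    (hD : D = μ * (ξ₂ * (ξ₃ + ρ) + φ * ξ₃ + ρ * d) + ρ * ω * d)
    (hξ₂0 : ξ₂ ≠ 0) (hξ₃0 : ξ₃ ≠ 0) :
    ξ₁ - σ * ρ / ξ₃ - ω * φ / ξ₂ = D / (ξ₂ * ξ₃) := by
  field_simp
  subst hξ₁ hD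
  rw [hξ₂, hξ₃]
  ring

theorem sica_equilibrium_iff {Λ μ ρ φ σ ω ξ₁ ξ₂ ξ₃ k S I C A F : ℝ}
    (hξ₂ : ξ₂ ≠ 0) (hξ₃ : ξ₃ ≠ 0) (hk : k = ξ₁ - σ * ρ / ξ₃ - ω * φ / ξ₂) (hk0 : k ≠ 0)
    (hI : I ≠ 0) :
    (Λ - μ * S - F * I = 0 ∧ F * I - ξ₁ * I + σ * A + ω * C = 0 ∧
        φ * I - ξ₂ * C = 0 ∧ ρ * I - ξ₃ * A = 0) ↔
      (F = k ∧ I = (Λ - μ * S) / k ∧ C = φ * I / ξ₂ ∧ A = ρ * I / ξ₃) := by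
  subst hk
  constructor
  · rintro ⟨hS, hI', hC, hA⟩
    have hC' : C = φ * I / ξ₂ := by field_simp; linear_combination -hC
    have hA' : A = ρ * I / ξ₃ := by field_simp; linear_combination -hA
    have hF : F = ξ₁ - σ * ρ / ξ₃ - ω * φ / ξ₂ := by
      apply mul_right_cancel₀ hI
      rw [hC', hA'] at hI'
      linear_combination hI'
    refine ⟨hF, ?_, hC', hA'⟩
    rw [eq_div_iff hk0, ← hF]
    linear_combination -hS
  · rintro ⟨rfl, hI', rfl, rfl⟩
    rw [eq_div_iff hk0] at hI'
    refine ⟨by linear_combination -hI', ?_, by field_simp; ring, by field_simp; ring⟩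
    field_simp
    ring

theorem stmt_9_general (Λ μ ρ φ σ ω d ξ₁ ξ₂ ξ₃ D S₀ R₀ : ℝ)
    (hΛ : 0 < Λ) (hμ : 0 < μ) (hρ : 0 < ρ) (hφ : 0 < φ) (hσ : 0 < σ)
    (hω : 0 < ω) (hd : 0 < d)
    (hξ₁ : ξ₁ = ρ + φ + μ) (hξ₂ : ξ₂ = ω + μ) (hξ₃ : ξ₃ = σ + μ + d)
    (hD : D = μ * (ξ₂ * (ξ₃ + ρ) + φ * ξ₃ + ρ * d) + ρ * ω * d)
    (hS₀ : S₀ = Λ / μ)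
    (f : ℝ → ℝ → ℝ)
    (hR₀def : R₀ = f S₀ 0 * ξ₂ * ξ₃ / D)
    (hR₀ : 1 < R₀)
    (hf_cont : ContinuousOn (fun p : ℝ × ℝ => f p.1 p.2) (Set.Ici 0 ×ˢ Set.Ici 0))
    (hf_cd : ContDiffOn ℝ 1 (fun p : ℝ × ℝ => f p.1 p.2) (Set.Ioi 0 ×ˢ Set.Ioi 0))
    (hH1 : ∀ I : ℝ, 0 ≤ I → f 0 I = 0)
    (hH2 : ∀ S I : ℝ, 0 < S → 0 ≤ I → 0 < deriv (fun s => f s I) S)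
    (hH3 : ∀ S I : ℝ, 0 ≤ S → 0 ≤ I → deriv (fun i => f S i) I ≤ 0) :
    ∃! p : ℝ × ℝ × ℝ × ℝ,
      (0 < p.1 ∧ p.1 < Λ / μ ∧ 0 < p.2.1 ∧ 0 < p.2.2.1 ∧ 0 < p.2.2.2) ∧
      Λ - μ * p.1 - f p.1 p.2.1 * p.2.1 = 0 ∧
      f p.1 p.2.1 * p.2.1 - ξ₁ * p.2.1 + σ * p.2.2.2 + ω * p.2.2.1 = 0 ∧
      φ * p.2.1 - ξ₂ * p.2.2.1 = 0 ∧
      ρ * p.2.1 - ξ₃ * p.2.2.2 = 0 := by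
  subst hS₀
  have hξ₂p : 0 < ξ₂ := by rw [hξ₂]; positivity
  have hξ₃p : 0 < ξ₃ := by rw [hξ₃]; positivity
  have hD0 : 0 < D := by rw [hD]; positivity
  set k := D / (ξ₂ * ξ₃) with hk_def
  have hk : k = ξ₁ - σ * ρ / ξ₃ - ω * φ / ξ₂ :=
    (sica_removal_rate_eq hξ₁ hξ₂ hξ₃ hD hξ₂p.ne' hξ₃p.ne').symm
  have hk0 : 0 < k := by positivity
  have hk_lt : k < f (Λ / μ) 0 := by
    have : f (Λ / μ) 0 = R₀ * k := by rw [hR₀def, hk_def]; field_simp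
    rw [this]
    exact lt_mul_of_one_lt_left hk0 hR₀
  obtain ⟨S, ⟨hS, hfS⟩, huniq⟩ := existsUnique_reduced_equilibrium hf_cont
    (hf_cd.differentiableOn one_ne_zero) hH1 hH2 hH3 hΛ hμ hk0 hk_lt
  have hI : 0 < (Λ - μ * S) / k := div_pos (sub_pos.2 ((lt_div_iff₀' hμ).1 hS.2)) hk0
  refine ⟨(S, (Λ - μ * S) / k, φ * ((Λ - μ * S) / k) / ξ₂, ρ * ((Λ - μ * S) / k) / ξ₃),
    ⟨⟨hS.1, hS.2, hI, by positivity, by positivity⟩,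
      (sica_equilibrium_iff hξ₂p.ne' hξ₃p.ne' hk hk0.ne' hI.ne').2 ⟨hfS, rfl, rfl, rfl⟩⟩, ?_⟩
  rintro ⟨S', I', C', A'⟩ ⟨⟨hS'0, hS'Λ, hI'0, -, -⟩, heq⟩
  obtain ⟨hF, rfl, rfl, rfl⟩ := (sica_equilibrium_iff (S := S') (I := I') (C := C') (A := A')
    hξ₂p.ne' hξ₃p.ne' hk hk0.ne' hI'0.ne').1 heq
  obtain rfl : S' = S := huniq S' ⟨⟨hS'0, hS'Λ⟩, hF⟩
  rfl

theorem stmt_9 (Λ μ ρ φ σ ω d ξ₁ ξ₂ ξ₃ D S₀ R₀ : ℝ)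
    (hΛ : 0 < Λ) (hμ : 0 < μ) (hρ : 0 < ρ) (hφ : 0 < φ) (hσ : 0 < σ)
    (hω : 0 < ω) (hd : 0 < d)
    (hξ₁ : ξ₁ = ρ + φ + μ) (hξ₂ : ξ₂ = ω + μ) (hξ₃ : ξ₃ = σ + μ + d)
    (hD : D = μ * (ξ₂ * (ξ₃ + ρ) + φ * ξ₃ + ρ * d) + ρ * ω * d)
    (hS₀ : S₀ = Λ / μ)
    (f : ℝ → ℝ → ℝ)
    (hR₀def : R₀ = f S₀ 0 * ξ₂ * ξ₃ / D)
    (hR₀ : 1 < R₀)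
    (hf_nonneg : ∀ S I : ℝ, 0 ≤ S → 0 ≤ I → 0 ≤ f S I)
    (hf_cont : ContinuousOn (fun p : ℝ × ℝ => f p.1 p.2) (Set.Ici 0 ×ˢ Set.Ici 0))
    (hf_cd : ContDiffOn ℝ 1 (fun p : ℝ × ℝ => f p.1 p.2) (Set.Ioi 0 ×ˢ Set.Ioi 0))
    (hH1 : ∀ I : ℝ, 0 ≤ I → f 0 I = 0)
    (hH2 : ∀ S I : ℝ, 0 < S → 0 ≤ I → 0 < deriv (fun s => f s I) S)
    (hH3 : ∀ S I : ℝ, 0 ≤ S → 0 ≤ I → deriv (fun i => f S i) I ≤ 0) :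
    ∃! p : ℝ × ℝ × ℝ × ℝ,
      (0 < p.1 ∧ p.1 < Λ / μ ∧ 0 < p.2.1 ∧ 0 < p.2.2.1 ∧ 0 < p.2.2.2) ∧
      Λ - μ * p.1 - f p.1 p.2.1 * p.2.1 = 0 ∧
      f p.1 p.2.1 * p.2.1 - ξ₁ * p.2.1 + σ * p.2.2.2 + ω * p.2.2.1 = 0 ∧
      φ * p.2.1 - ξ₂ * p.2.2.1 = 0 ∧
      ρ * p.2.1 - ξ₃ * p.2.2.2 = 0 :=
  stmt_9_general Λ μ ρ φ σ ω d ξ₁ ξ₂ ξ₃ D S₀ R₀ hΛ hμ hρ hφ hσ hω hd hξ₁ hξ₂ hξ₃ hD hS₀ f hR₀def hR₀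
    hf_cont hf_cd hH1 hH2 hH3
end

section
/- Assume the SICA parameters are positive and let f(S₀,0) > 0 be given. Set a₁ = ξ₁ + ξ₂ + ξ₃ − f(S₀,0), a₂ = ξ₁ξ₂ + ξ₁ξ₃ + ξ₂ξ₃ − (ξ₂ + ξ₃) f(S₀,0) − φω − ρσ, and a₃ = (1 − R₀)𝒟. If R₀ > 1, then the characteristic polynomial g(λ) = λ³ + a₁λ² + a₂λ + a₃ of the Jacobian of the SICA system at the disease-free equilibrium has a real root λ* > 0; in particular |arg(λ*)| = 0 < απ/2 for every α ∈ (0,1], so the disease-free equilibrium is unstable. -/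
/- STATEMENT 10: With positive SICA parameters and f(S₀,0) > 0, set
a₁ = ξ₁+ξ₂+ξ₃ − f(S₀,0), a₂ = ξ₁ξ₂+ξ₁ξ₃+ξ₂ξ₃ − (ξ₂+ξ₃)f(S₀,0) − φω − ρσ,
a₃ = (1 − R₀)𝒟. If R₀ > 1, then g(λ) = λ³ + a₁λ² + a₂λ + a₃ has a real root
λ* > 0; in particular |arg(λ*)| = 0 < απ/2 for every α ∈ (0,1]
(so the disease-free equilibrium is unstable). -/
theorem stmt_10 (Λ μ ρ φ σ ω d fS0 ξ₁ ξ₂ ξ₃ D R₀ a₁ a₂ a₃ : ℝ)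
    (hΛ : 0 < Λ) (hμ : 0 < μ) (hρ : 0 < ρ) (hφ : 0 < φ) (hσ : 0 < σ)
    (hω : 0 < ω) (hd : 0 < d) (hfS0 : 0 < fS0)
    (hξ₁ : ξ₁ = ρ + φ + μ) (hξ₂ : ξ₂ = ω + μ) (hξ₃ : ξ₃ = σ + μ + d)
    (hD : D = μ * (ξ₂ * (ξ₃ + ρ) + φ * ξ₃ + ρ * d) + ρ * ω * d)
    (hR₀def : R₀ = fS0 * ξ₂ * ξ₃ / D)
    (ha₁ : a₁ = ξ₁ + ξ₂ + ξ₃ - fS0)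
    (ha₂ : a₂ = ξ₁ * ξ₂ + ξ₁ * ξ₃ + ξ₂ * ξ₃ - (ξ₂ + ξ₃) * fS0 - φ * ω - ρ * σ)
    (ha₃ : a₃ = (1 - R₀) * D)
    (hR₀ : 1 < R₀) :
    ∃ l : ℝ, 0 < l ∧ l ^ 3 + a₁ * l ^ 2 + a₂ * l + a₃ = 0 ∧
      |Complex.arg (l : ℂ)| = 0 ∧
      ∀ α : ℝ, 0 < α → α ≤ 1 → |Complex.arg (l : ℂ)| < α * Real.pi / 2 := by
  have hDpos : 0 < D := by
    subst hξ₂ hξ₃; rw [hD]; positivity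
  have ha₃neg : a₃ < 0 := by
    rw [ha₃]; nlinarith
  obtain ⟨M, hMdef⟩ : ∃ M : ℝ, M = 1 + |a₁| + |a₂| + |a₃| := ⟨_, rfl⟩
  have hM1 : 1 ≤ M := by
    have := abs_nonneg a₁; have := abs_nonneg a₂; have := abs_nonneg a₃
    linarith
  have hM0 : (0:ℝ) ≤ M := by linarith
  have h1 : -(|a₁| * M ^ 2) ≤ a₁ * M ^ 2 := by
    have := mul_le_mul_of_nonneg_right (neg_abs_le a₁) (sq_nonneg M)
    linarith [neg_mul (|a₁|) (M^2)]
  have h2 : -(|a₂| * M) ≤ a₂ * M := by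
    have := mul_le_mul_of_nonneg_right (neg_abs_le a₂) hM0
    linarith [neg_mul (|a₂|) M]
  have h3 : -|a₃| ≤ a₃ := neg_abs_le a₃
  have hMsq : M ≤ M ^ 2 := by nlinarith
  have hgM : 0 < M ^ 3 + a₁ * M ^ 2 + a₂ * M + a₃ := by
    have h4 : |a₂| * M ≤ |a₂| * M ^ 2 :=
      mul_le_mul_of_nonneg_left hMsq (abs_nonneg a₂)
    have h5 : |a₃| ≤ |a₃| * M ^ 2 := by
      nlinarith [abs_nonneg a₃]
    have h6 : M ^ 2 + |a₁| * M ^ 2 + |a₂| * M ^ 2 + |a₃| * M ^ 2 ≤ M ^ 3 := by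
      nlinarith [sq_nonneg M]
    linarith
  have hcont : Continuous (fun x : ℝ => x ^ 3 + a₁ * x ^ 2 + a₂ * x + a₃) := by
    fun_prop
  have hmem : (0:ℝ) ∈ Set.Icc ((fun x : ℝ => x ^ 3 + a₁ * x ^ 2 + a₂ * x + a₃) 0)
      ((fun x : ℝ => x ^ 3 + a₁ * x ^ 2 + a₂ * x + a₃) M) := by
    constructor
    · simp; linarith
    · simpa using hgM.le
  obtain ⟨l, hl, hgl⟩ := intermediate_value_Icc hM0 hcont.continuousOn hmem
  simp only at hgl
  have hlpos : 0 < l := by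
    rcases lt_or_eq_of_le hl.1 with h | h
    · exact h
    · exfalso
      rw [← h] at hgl
      simp at hgl
      linarith
  have harg : Complex.arg (l : ℂ) = 0 := Complex.arg_ofReal_of_nonneg hlpos.le
  refine ⟨l, hlpos, hgl, by simp [harg], ?_⟩
  intro α hα hα1
  rw [harg]
  simp only [abs_zero]
  have := Real.pi_pos
  positivity
end

section
/- Assume the SICA parameters are positive; let f : [0,∞)² → [0,∞) satisfy (H2) and be positive for positive arguments, and let (S*, I*, C*, A*) with S*, I*, C*, A* > 0 satisfy the equilibrium relations Λ = μS* + f(S*,I*)I*, ξ₁I* = f(S*,I*)I* + ωC* + σA*, φI* = ξ₂C*, ρI* = ξ₃A*. Assume further (H4): (1 − f(S,I)/f(S,I*))(f(S,I*)/f(S,I) − I/I*) ≤ 0 for all S, I > 0. Then for all S, I, C, A > 0: (1 − f(S*,I*)/f(S,I*))·(Λ − μS − f(S,I)I) + (1 − I*/I)·(f(S,I)I − ξ₁I + σA + ωC) + (ω/ξ₂)(1 − C*/C)(φI − ξ₂C) + (σ/ξ₃)(1 − A*/A)(ρI − ξ₃A) ≤ 0. -/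
set_option maxHeartbeats 1000000

private lemma amgm3_aux (a b c : ℝ) (ha : 0 < a) (hb : 0 < b) (hc : 0 < c)
    (h : a * b * c = 1) : 3 ≤ a + b + c := by
  nlinarith [sq_nonneg (a-b), sq_nonneg (b-c), sq_nonneg (a-c), sq_nonneg (a+b+c-3),
    mul_pos ha hb, mul_pos hb hc, mul_pos ha hc]


/- STATEMENT 11: Algebraic core of the global stability of the endemic equilibrium.
With positive SICA parameters, f satisfying (H2) and positive for positive
arguments, (S*,I*,C*,A*) a positive solution of the equilibrium relations, and
(H4): (1 − f(S,I)/f(S,I*))(f(S,I*)/f(S,I) − I/I*) ≤ 0 for all S,I > 0, one has,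
for all S, I, C, A > 0:
(1 − f(S*,I*)/f(S,I*))·(Λ − μS − f(S,I)I) + (1 − I*/I)·(f(S,I)I − ξ₁I + σA + ωC)
 + (ω/ξ₂)(1 − C*/C)(φI − ξ₂C) + (σ/ξ₃)(1 − A*/A)(ρI − ξ₃A) ≤ 0. -/
theorem stmt_11 (Λ μ ρ φ σ ω d ξ₁ ξ₂ ξ₃ : ℝ)
    (hΛ : 0 < Λ) (hμ : 0 < μ) (hρ : 0 < ρ) (hφ : 0 < φ) (hσ : 0 < σ)
    (hω : 0 < ω) (hd : 0 < d)
    (hξ₁ : ξ₁ = ρ + φ + μ) (hξ₂ : ξ₂ = ω + μ) (hξ₃ : ξ₃ = σ + μ + d)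
    (f : ℝ → ℝ → ℝ)
    (hf_cd : ContDiffOn ℝ 1 (fun p : ℝ × ℝ => f p.1 p.2) (Set.Ioi 0 ×ˢ Set.Ioi 0))
    (hH2 : ∀ S I : ℝ, 0 < S → 0 ≤ I → 0 < deriv (fun s => f s I) S)
    (hf_pos : ∀ S I : ℝ, 0 < S → 0 < I → 0 < f S I)
    (Sstar Istar Cstar Astar : ℝ)
    (hSstar : 0 < Sstar) (hIstar : 0 < Istar) (hCstar : 0 < Cstar) (hAstar : 0 < Astar)
    (heq1 : Λ = μ * Sstar + f Sstar Istar * Istar)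
    (heq2 : ξ₁ * Istar = f Sstar Istar * Istar + ω * Cstar + σ * Astar)
    (heq3 : φ * Istar = ξ₂ * Cstar)
    (heq4 : ρ * Istar = ξ₃ * Astar)
    (hH4 : ∀ S I : ℝ, 0 < S → 0 < I →
      (1 - f S I / f S Istar) * (f S Istar / f S I - I / Istar) ≤ 0) :
    ∀ S I C A : ℝ, 0 < S → 0 < I → 0 < C → 0 < A →
      (1 - f Sstar Istar / f S Istar) * (Λ - μ * S - f S I * I)
        + (1 - Istar / I) * (f S I * I - ξ₁ * I + σ * A + ω * C)
        + (ω / ξ₂) * (1 - Cstar / C) * (φ * I - ξ₂ * C)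
        + (σ / ξ₃) * (1 - Astar / A) * (ρ * I - ξ₃ * A) ≤ 0 := by
  intro S I C A hS hI hC hA
  have hk : 0 < f Sstar Istar := hf_pos Sstar Istar hSstar hIstar
  have hh : 0 < f S Istar := hf_pos S Istar hS hIstar
  have hg : 0 < f S I := hf_pos S I hS hI
  have hξ2 : 0 < ξ₂ := by rw [hξ₂]; linarith
  have hξ3 : 0 < ξ₃ := by rw [hξ₃]; linarith
  -- monotonicity of s ↦ f s I*
  have hmonof : StrictMonoOn (fun s => f s Istar) (Set.Ioi (0 : ℝ)) := by
    apply strictMonoOn_of_deriv_pos (convex_Ioi 0)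
    · intro s hs
      have hd : DifferentiableAt ℝ (fun s => f s Istar) s := by
        by_contra hnd
        have h0 := deriv_zero_of_not_differentiableAt hnd
        have := hH2 s Istar hs hIstar.le
        rw [h0] at this
        exact lt_irrefl 0 this
      exact hd.continuousAt.continuousWithinAt
    · intro s hs
      rw [interior_Ioi] at hs
      exact hH2 s Istar hs hIstar.le
  have hmonoS : (Sstar - S) * (1 - f Sstar Istar / f S Istar) ≤ 0 := by
    rcases le_total S Sstar with hle | hle
    · have hfk : f S Istar ≤ f Sstar Istar := hmonof.monotoneOn hS hSstar hle
      have h1 : 1 ≤ f Sstar Istar / f S Istar := (one_le_div hh).mpr hfk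
      have h2 : 0 ≤ Sstar - S := by linarith
      nlinarith
    · have hfk : f Sstar Istar ≤ f S Istar := hmonof.monotoneOn hSstar hS hle
      have h1 : f Sstar Istar / f S Istar ≤ 1 := (div_le_one hh).mpr hfk
      have h2 : Sstar - S ≤ 0 := by linarith
      nlinarith
  -- AM-GM pieces
  have amgm2 : ∀ a b : ℝ, 0 < a → 0 < b → 2 - a / b - b / a ≤ 0 := by
    intro a b ha hb
    rw [sub_sub, sub_nonpos, div_add_div _ _ hb.ne' ha.ne',
      le_div_iff₀ (mul_pos hb ha)]
    nlinarith [sq_nonneg (a - b)]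
  have hCterm : 2 - C * Istar / (Cstar * I) - Cstar * I / (C * Istar) ≤ 0 :=
    amgm2 _ _ (mul_pos hC hIstar) (mul_pos hCstar hI)
  have hAterm : 2 - A * Istar / (Astar * I) - Astar * I / (A * Istar) ≤ 0 :=
    amgm2 _ _ (mul_pos hA hIstar) (mul_pos hAstar hI)
  -- the combined H4 + 3-term AM-GM bound
  have hH4' := hH4 S I hS hI
  have h3amgm : 3 - f Sstar Istar / f S Istar - f S I / f Sstar Istar
      - f S Istar / f S I ≤ 0 := by
    have habc : (f Sstar Istar / f S Istar) * (f S I / f Sstar Istar)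
        * (f S Istar / f S I) = 1 := by
      field_simp
    have := amgm3_aux _ _ _ (div_pos hk hh) (div_pos hg hk) (div_pos hh hg) habc
    linarith
  have hIterm : 2 - f Sstar Istar / f S Istar + f S I * I / (f S Istar * Istar)
      - f S I / f Sstar Istar - I / Istar ≤ 0 := by
    have hexp : f S I * I / (f S Istar * Istar) - I / Istar
        ≤ 1 - f S Istar / f S I := by
      have h4 : f S Istar / f S I - I / Istar - 1
          + (f S I / f S Istar) * (I / Istar) ≤ 0 := by
        have hyc : f S I / f S Istar * (f S Istar / f S I) = 1 := by
          field_simp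
        nlinarith [hH4', hyc]
      have hrw : f S I * I / (f S Istar * Istar)
          = (f S I / f S Istar) * (I / Istar) := by
        field_simp
      rw [hrw]; linarith
    linarith
  -- the key algebraic identity
  have hCstar' : Cstar = φ * Istar / ξ₂ := by
    field_simp
    linarith [heq3]
  have hAstar' : Astar = ρ * Istar / ξ₃ := by
    field_simp
    linarith [heq4]
  have hξ₁' : ξ₁ = (f Sstar Istar * Istar + ω * Cstar + σ * Astar) / Istar := by
    field_simp
    linarith [heq2]
  have key : (1 - f Sstar Istar / f S Istar) * (Λ - μ * S - f S I * I)
        + (1 - Istar / I) * (f S I * I - ξ₁ * I + σ * A + ω * C)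
        + (ω / ξ₂) * (1 - Cstar / C) * (φ * I - ξ₂ * C)
        + (σ / ξ₃) * (1 - Astar / A) * (ρ * I - ξ₃ * A)
      = μ * ((Sstar - S) * (1 - f Sstar Istar / f S Istar))
        + f Sstar Istar * Istar * (2 - f Sstar Istar / f S Istar
            + f S I * I / (f S Istar * Istar) - f S I / f Sstar Istar - I / Istar)
        + ω * Cstar * (2 - C * Istar / (Cstar * I) - Cstar * I / (C * Istar))
        + σ * Astar * (2 - A * Istar / (Astar * I) - Astar * I / (A * Istar)) := by
    subst heq1
    rw [hξ₁', hCstar', hAstar']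
    field_simp
    ring
  rw [key]
  have t1 : μ * ((Sstar - S) * (1 - f Sstar Istar / f S Istar)) ≤ 0 :=
    mul_nonpos_of_nonneg_of_nonpos hμ.le hmonoS
  have t2 : f Sstar Istar * Istar * (2 - f Sstar Istar / f S Istar
      + f S I * I / (f S Istar * Istar) - f S I / f Sstar Istar - I / Istar) ≤ 0 :=
    mul_nonpos_of_nonneg_of_nonpos (mul_pos hk hIstar).le hIterm
  have t3 : ω * Cstar * (2 - C * Istar / (Cstar * I) - Cstar * I / (C * Istar)) ≤ 0 :=
    mul_nonpos_of_nonneg_of_nonpos (mul_pos hω hCstar).le hCterm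
  have t4 : σ * Astar * (2 - A * Istar / (Astar * I) - Astar * I / (A * Istar)) ≤ 0 :=
    mul_nonpos_of_nonneg_of_nonpos (mul_pos hσ hAstar).le hAterm
  linarith
end
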